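/- arXiv:2103.01407 — 2 statements merged into one kernel-verified Lean document; each statement's English description precedes it below -/
import Mathlib

section
/- Let T be the tree obtained from 2 disjoint copies of P₂ and k ≥ 0 disjoint copies of P₃ by fixing a vertex v₀ in one copy of P₂ and joining v₀ by an edge to one vertex of the other copy of P₂ and to one vertex of each copy of P₃. Then ψ(T) = 2k + 3. -/
open Finset

variable {V : Type*} [Fintype V] [DecidableEq V]

/-- `F` is a dissociation set: it induces a subgraph of maximum degree at most 1,
i.e. every vertex of `F` has at most one neighbor in `F`. -/
def IsDissoc (G : SimpleGraph V) (F : Finset V) : Prop :=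
  ∀ v ∈ F, ∀ u ∈ F, ∀ w ∈ F, G.Adj v u → G.Adj v w → u = w

open Classical in
/-- The dissociation number: maximum cardinality of a dissociation set. -/
noncomputable def dissocNum (G : SimpleGraph V) : ℕ :=
  (Finset.univ.filter fun F : Finset V => IsDissoc G F).sup Finset.card

/-- A maximum dissociation set. -/
def IsMaxDissoc (G : SimpleGraph V) (F : Finset V) : Prop :=
  IsDissoc G F ∧ F.card = dissocNum G

open Classical in
/-- The number of maximum dissociation sets. -/
noncomputable def numMaxDissoc (G : SimpleGraph V) : ℕ :=
  (Finset.univ.filter fun F : Finset V => IsMaxDissoc G F).card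

/-- Vertices of the tree built from `2P₂ ∪ kP₃`: the fixed edge `v0–a`, the other edge
`b1–b2`, and `k` paths `p i 0 – p i 1 – p i 2`. -/
inductive T1V (k : ℕ)
  | v0 : T1V k
  | a : T1V k
  | b1 : T1V k
  | b2 : T1V k
  | p : Fin k → Fin 3 → T1V k
  deriving DecidableEq, Fintype

/-- The tree obtained from `2P₂ ∪ kP₃` by joining the vertex `v0` of the fixed `P₂`
to a vertex `b1` of the other `P₂` and to the leaf `p i 0` of each `P₃`. -/
def T1 (k : ℕ) : SimpleGraph (T1V k) :=
  SimpleGraph.fromRel fun x y =>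
    (x = T1V.v0 ∧ y = T1V.a) ∨ (x = T1V.v0 ∧ y = T1V.b1) ∨ (x = T1V.b1 ∧ y = T1V.b2) ∨
    (∃ i, x = T1V.v0 ∧ y = T1V.p i 0) ∨
    (∃ i, x = T1V.p i 0 ∧ y = T1V.p i 1) ∨
    (∃ i, x = T1V.p i 1 ∧ y = T1V.p i 2)

/-! The vertex set is covered by the path `a – v0 – b1`, the vertex `b2` and the `k` paths
`p i 0 – p i 1 – p i 2`; a dissociation set misses a vertex of every path on three vertices, so it
has at most `2 + 1 + 2k` vertices. Conversely, removing `v0` and every `p i 0` leaves the edges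
`b1 – b2`, `p i 1 – p i 2` and the isolated vertex `a`, a dissociation set of size `2k + 3`. -/

section Dissoc

variable {W : Type*} {G : SimpleGraph W} {F : Finset W}

theorem IsDissoc.of_forall_adj_eq (partner : W → W)
    (h : ∀ v ∈ F, ∀ u ∈ F, G.Adj v u → u = partner v) : IsDissoc G F :=
  fun v hv u hu w hw hvu hvw => (h v hv u hu hvu).trans (h v hv w hw hvw).symm

theorem IsDissoc.card_inter_path_le_two [DecidableEq W] (hF : IsDissoc G F) {u v w : W}
    (hvu : G.Adj v u) (hvw : G.Adj v w) (huw : u ≠ w) : (F ∩ {u, v, w}).card ≤ 2 := by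
  by_contra! h
  have hpath : {u, v, w} ⊆ F := by
    have hcard : ({u, v, w} : Finset W).card ≤ (F ∩ {u, v, w}).card := card_le_three.trans h
    exact (eq_of_subset_of_card_le inter_subset_right hcard) ▸ inter_subset_left
  simp only [insert_subset_iff, singleton_subset_iff] at hpath
  exact huw (hF v hpath.2.1 u hpath.1 w hpath.2.2 hvu hvw)

theorem IsDissoc.card_le_dissocNum [Fintype W] (hF : IsDissoc G F) : F.card ≤ dissocNum G := by
  classical
  exact Finset.le_sup (f := Finset.card) (by simpa using hF)

theorem dissocNum_le [Fintype W] {n : ℕ} (h : ∀ F, IsDissoc G F → F.card ≤ n) :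
    dissocNum G ≤ n := by
  classical
  exact Finset.sup_le fun F hF => h F (by simpa using hF)

end Dissoc

namespace T1

open T1V

variable {k : ℕ}

theorem adj_v0_a : (T1 k).Adj v0 a := by simp [T1]

theorem adj_v0_b1 : (T1 k).Adj v0 b1 := by simp [T1]

theorem adj_p1_p0 {i : Fin k} : (T1 k).Adj (p i 1) (p i 0) := by simp [T1]

theorem adj_p1_p2 {i : Fin k} : (T1 k).Adj (p i 1) (p i 2) := by simp [T1]

theorem card_le_of_isDissoc {F : Finset (T1V k)} (hF : IsDissoc (T1 k) F) :
    F.card ≤ 2 * k + 3 := by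
  have hcover : F ⊆ (F ∩ {a, v0, b1}) ∪ {b2} ∪
      univ.biUnion fun i => F ∩ {p i 0, p i 1, p i 2} := by
    intro x hx
    cases x with
    | p i j => fin_cases j <;> simp_all
    | _ => simp [hx]
  calc F.card
      ≤ (F ∩ {a, v0, b1}).card + ({b2} : Finset (T1V k)).card +
          ∑ i, (F ∩ {p i 0, p i 1, p i 2}).card :=
        (card_le_card hcover).trans <|
          (card_union_le _ _).trans (add_le_add (card_union_le _ _) card_biUnion_le)
    _ ≤ 2 + 1 + ∑ _i : Fin k, 2 := by
        gcongr with i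
        · exact hF.card_inter_path_le_two adj_v0_a adj_v0_b1 (by simp)
        · exact (card_singleton b2).le
        · exact hF.card_inter_path_le_two adj_p1_p0 adj_p1_p2 (by simp)
    _ = 2 * k + 3 := by simp [mul_comm, add_comm]

/- Negation in `Fin 3` swaps `1` and `2`. -/
def partner : T1V k → T1V k
  | b1 => b2
  | b2 => b1
  | p i j => p i (-j)
  | x => x

def largeDissocSet (k : ℕ) : Finset (T1V k) :=
  {a, b1, b2} ∪ (univ ×ˢ {1, 2}).image fun ij => p ij.1 ij.2

theorem isDissoc_largeDissocSet : IsDissoc (T1 k) (largeDissocSet k) := by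
  refine IsDissoc.of_forall_adj_eq partner ?_
  intro v hv u hu h
  cases v <;> cases u <;> simp [largeDissocSet, T1, partner] at hv hu h ⊢
  grind

theorem card_largeDissocSet : (largeDissocSet k).card = 2 * k + 3 := by
  rw [largeDissocSet, card_union_of_disjoint, card_image_of_injective, card_product]
  · simp [mul_comm, add_comm]
  · intro x y h; simpa [Prod.ext_iff] using h
  · simp [disjoint_left]

end T1

/-- The tree `T1 k` has dissociation number `2k + 3`. -/
theorem stmt_8 (k : ℕ) : dissocNum (T1 k) = 2 * k + 3 :=
  le_antisymm (dissocNum_le fun _ => T1.card_le_of_isDissoc)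
    (T1.card_largeDissocSet ▸ T1.isDissoc_largeDissocSet.card_le_dissocNum)
end

section
/- Let T be the tree obtained from 2 disjoint copies of P₂ and k ≥ 0 disjoint copies of P₃ by fixing a vertex v₀ in one copy of P₂ and joining v₀ to one vertex of the other copy of P₂ and to a leaf of each copy of P₃. Then T has exactly 3^k + 1 maximum dissociation sets, and exactly 3^k of them do not contain v₀. -/
open Finset

variable {V : Type*} [Fintype V] [DecidableEq V]

/-!
Split the vertices into the path `a – v0 – b1 – b2` and the `k` paths `P₃`. A dissociation set
contains no three consecutive vertices of a path, so it meets each `P₃` in at most two vertices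
and the `P₄` in at most three, the only triples being `{a, v0, b2}` and `{a, b1, b2}`. Hence the
dissociation number is `2k + 3`, and a maximum set meets every `P₃` in two vertices and the `P₄` in
one of these triples. With `{a, v0, b2}`, the vertex `v0` already has its neighbour `a`, which
excludes every `p i 0` and leaves one set; with `{a, b1, b2}` each `P₃` may omit any of its three
vertices, which gives `3 ^ k` sets.
-/

theorem IsDissoc.not_path_three {α : Type*} {G : SimpleGraph α} {F : Finset α} (hF : IsDissoc G F)
    {x y z : α} (hyx : G.Adj y x) (hyz : G.Adj y z) (hxz : x ≠ z) : ¬(x ∈ F ∧ y ∈ F ∧ z ∈ F) :=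
  fun ⟨hx, hy, hz⟩ => hxz (hF y hy x hx z hz hyx hyz)

theorem dissocNum_eq_of_le {α : Type*} [Fintype α] {G : SimpleGraph α} {n : ℕ}
    (hle : ∀ F, IsDissoc G F → #F ≤ n) {F₀ : Finset α} (hF₀ : IsDissoc G F₀) (hcard : #F₀ = n) :
    dissocNum G = n := by
  classical
  refine le_antisymm (Finset.sup_le fun F hF => hle F (mem_filter.1 hF).2) ?_
  rw [← hcard]
  exact le_sup (f := card) (mem_filter.2 ⟨mem_univ _, hF₀⟩)

theorem card_le_two_of_fin_three (S : Finset (Fin 3)) (h : ¬(0 ∈ S ∧ 1 ∈ S ∧ 2 ∈ S)) : #S ≤ 2 := by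
  revert S; decide

theorem exists_eq_compl_singleton_of_fin_three (S : Finset (Fin 3)) (h : #S = 2) :
    ∃ j, S = {j}ᶜ := by
  revert S; decide

theorem card_le_three_of_fin_four (S : Finset (Fin 4)) (h₀ : ¬(0 ∈ S ∧ 1 ∈ S ∧ 2 ∈ S))
    (h₁ : ¬(1 ∈ S ∧ 2 ∈ S ∧ 3 ∈ S)) : #S ≤ 3 := by
  revert S; decide

theorem eq_of_card_eq_three_of_fin_four (S : Finset (Fin 4)) (h₀ : ¬(0 ∈ S ∧ 1 ∈ S ∧ 2 ∈ S))
    (h₁ : ¬(1 ∈ S ∧ 2 ∈ S ∧ 3 ∈ S)) (h : #S = 3) : S = {0, 1, 3} ∨ S = {0, 2, 3} := by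
  revert S; decide

namespace T1

open T1V

variable {k : ℕ}

-- the path `a – v0 – b1 – b2`, in order
def core : Fin 4 → T1V k := ![a, v0, b1, b2]

def equivSum : T1V k ≃ Fin 4 ⊕ Fin k × Fin 3 where
  toFun
    | a => .inl 0
    | v0 => .inl 1
    | b1 => .inl 2
    | b2 => .inl 3
    | p i j => .inr (i, j)
  invFun
    | .inl j => core j
    | .inr (i, j) => p i j
  left_inv x := by cases x <;> rfl
  right_inv := by
    rintro (j | ⟨i, j⟩)
    · fin_cases j <;> rfl
    · rfl

def coreTrace (F : Finset (T1V k)) : Finset (Fin 4) := {j | core j ∈ F}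

def pathTrace (F : Finset (T1V k)) (i : Fin k) : Finset (Fin 3) := {j | p i j ∈ F}

@[simp]
theorem mem_coreTrace {F : Finset (T1V k)} {j : Fin 4} : j ∈ coreTrace F ↔ core j ∈ F := by
  simp [coreTrace]

@[simp]
theorem mem_pathTrace {F : Finset (T1V k)} {i : Fin k} {j : Fin 3} :
    j ∈ pathTrace F i ↔ p i j ∈ F := by
  simp [pathTrace]

theorem card_eq_coreTrace_add_pathTrace (F : Finset (T1V k)) :
    #F = #(coreTrace F) + ∑ i, #(pathTrace F i) := by
  calc #F = ∑ x, if x ∈ F then 1 else 0 := by rw [← card_filter, filter_univ_mem]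
    _ = ∑ y, if equivSum.symm y ∈ F then 1 else 0 := (equivSum.symm.sum_comp _).symm
    _ = _ := by
      simp only [Fintype.sum_sum_type, Fintype.sum_prod_type, coreTrace, pathTrace, card_filter]
      rfl

theorem ext_trace {F G : Finset (T1V k)} (hcore : coreTrace F = coreTrace G)
    (hpath : ∀ i, pathTrace F i = pathTrace G i) : F = G := by
  ext x
  cases x with
  | p i j => simpa using Finset.ext_iff.1 (hpath i) j
  | a => simpa [core] using Finset.ext_iff.1 hcore 0
  | v0 => simpa [core] using Finset.ext_iff.1 hcore 1
  | b1 => simpa [core] using Finset.ext_iff.1 hcore 2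
  | b2 => simpa [core] using Finset.ext_iff.1 hcore 3

theorem coreTrace_no_path_three {F : Finset (T1V k)} (hF : IsDissoc (T1 k) F) :
    ¬(0 ∈ coreTrace F ∧ 1 ∈ coreTrace F ∧ 2 ∈ coreTrace F) ∧
      ¬(1 ∈ coreTrace F ∧ 2 ∈ coreTrace F ∧ 3 ∈ coreTrace F) := by
  simp only [mem_coreTrace]
  exact ⟨hF.not_path_three (y := v0) (by simp [T1, core]) (by simp [T1, core]) (by simp [core]),
    hF.not_path_three (y := b1) (by simp [T1, core]) (by simp [T1, core]) (by simp [core])⟩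

theorem card_pathTrace_le {F : Finset (T1V k)} (hF : IsDissoc (T1 k) F) (i : Fin k) :
    #(pathTrace F i) ≤ 2 := by
  apply card_le_two_of_fin_three
  simpa using hF.not_path_three (y := p i 1) (by simp [T1]) (by simp [T1]) (by simp)

theorem card_coreTrace_le {F : Finset (T1V k)} (hF : IsDissoc (T1 k) F) : #(coreTrace F) ≤ 3 :=
  card_le_three_of_fin_four _ (coreTrace_no_path_three hF).1 (coreTrace_no_path_three hF).2

theorem sum_card_pathTrace_le {F : Finset (T1V k)} (hF : IsDissoc (T1 k) F) :
    ∑ i, #(pathTrace F i) ≤ 2 * k := by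
  simpa [mul_comm] using sum_le_sum fun i (_ : i ∈ univ) => card_pathTrace_le hF i

theorem card_le {F : Finset (T1V k)} (hF : IsDissoc (T1 k) F) : #F ≤ 2 * k + 3 := by
  rw [card_eq_coreTrace_add_pathTrace]
  linarith [card_coreTrace_le hF, sum_card_pathTrace_le hF]

def withV0 : Finset (T1V k) := {x | x ≠ b1 ∧ ∀ i, x ≠ p i 0}

def omitting (f : Fin k → Fin 3) : Finset (T1V k) := {x | x ≠ v0 ∧ ∀ i, x ≠ p i (f i)}

theorem coreTrace_withV0 : coreTrace (withV0 : Finset (T1V k)) = {0, 1, 3} := by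
  ext j; fin_cases j <;> simp [withV0, core]

theorem pathTrace_withV0 (i : Fin k) : pathTrace withV0 i = {0}ᶜ := by
  ext j; simp [withV0]

theorem coreTrace_omitting (f : Fin k → Fin 3) : coreTrace (omitting f) = {0, 2, 3} := by
  ext j; fin_cases j <;> simp [omitting, core]

theorem pathTrace_omitting (f : Fin k → Fin 3) (i : Fin k) : pathTrace (omitting f) i = {f i}ᶜ := by
  ext j; simp [omitting]

theorem card_withV0 : #(withV0 : Finset (T1V k)) = 2 * k + 3 := by
  simp [card_eq_coreTrace_add_pathTrace, coreTrace_withV0, pathTrace_withV0, card_compl, mul_comm,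
    add_comm]

theorem card_omitting (f : Fin k → Fin 3) : #(omitting f) = 2 * k + 3 := by
  simp [card_eq_coreTrace_add_pathTrace, coreTrace_omitting, pathTrace_omitting, card_compl,
    mul_comm, add_comm]

theorem v0_mem_withV0 : v0 ∈ (withV0 : Finset (T1V k)) := by
  simp [withV0]

theorem v0_notMem_omitting (f : Fin k → Fin 3) : v0 ∉ omitting f := by
  simp [omitting]

theorem isDissoc_withV0 : IsDissoc (T1 k) withV0 := by
  intro v hv u hu w hw hvu hvw
  simp only [withV0, mem_filter, mem_univ, true_and] at hv hu hw
  cases v <;> cases u <;> cases w <;> simp_all [T1]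
  all_goals grind

theorem isDissoc_omitting (f : Fin k → Fin 3) : IsDissoc (T1 k) (omitting f) := by
  intro v hv u hu w hw hvu hvw
  simp only [omitting, mem_filter, mem_univ, true_and] at hv hu hw
  cases v <;> cases u <;> cases w <;> simp_all [T1]
  all_goals grind

theorem dissocNum_eq : dissocNum (T1 k) = 2 * k + 3 :=
  dissocNum_eq_of_le (fun _ => card_le) isDissoc_withV0 card_withV0

theorem eq_withV0_or_omitting {F : Finset (T1V k)} (hF : IsDissoc (T1 k) F)
    (hcard : #F = 2 * k + 3) : F = withV0 ∨ ∃ f, F = omitting f := by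
  obtain ⟨hcore, hpath⟩ : #(coreTrace F) = 3 ∧ ∀ i, #(pathTrace F i) = 2 := by
    rw [card_eq_coreTrace_add_pathTrace] at hcard
    have hcore := card_coreTrace_le hF
    have hsum := sum_card_pathTrace_le hF
    refine ⟨by omega, fun i => (sum_eq_sum_iff_of_le fun i _ => card_pathTrace_le hF i).1 ?_ i
      (mem_univ _)⟩
    rw [sum_const, card_univ, Fintype.card_fin, smul_eq_mul]
    omega
  choose f hf using fun i => exists_eq_compl_singleton_of_fin_three _ (hpath i)
  obtain hc | hc := eq_of_card_eq_three_of_fin_four _ (coreTrace_no_path_three hF).1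
    (coreTrace_no_path_three hF).2 hcore
  · left
    have hf0 : ∀ i, f i = 0 := fun i => by
      have hav : 0 ∈ coreTrace F ∧ 1 ∈ coreTrace F := by simp [hc]
      have hp : 0 ∉ pathTrace F i := by
        simp only [mem_coreTrace, mem_pathTrace] at hav ⊢
        exact fun h => hF.not_path_three (y := v0) (by simp [T1, core]) (by simp [T1])
          (by simp [core]) ⟨hav.1, hav.2, h⟩
      simpa [hf, eq_comm] using hp
    refine ext_trace (by rw [hc, coreTrace_withV0]) fun i => ?_
    rw [hf, pathTrace_withV0, hf0]
  · exact Or.inr ⟨f, ext_trace (by rw [hc, coreTrace_omitting]) fun i => by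
      rw [hf, pathTrace_omitting]⟩

theorem isMaxDissoc_iff {F : Finset (T1V k)} :
    IsMaxDissoc (T1 k) F ↔ F = withV0 ∨ ∃ f, F = omitting f := by
  rw [IsMaxDissoc, dissocNum_eq]
  constructor
  · exact fun ⟨hF, hcard⟩ => eq_withV0_or_omitting hF hcard
  · rintro (rfl | ⟨f, rfl⟩)
    exacts [⟨isDissoc_withV0, card_withV0⟩, ⟨isDissoc_omitting f, card_omitting f⟩]

theorem omitting_injective : Function.Injective (omitting (k := k)) := by
  intro f g h
  funext i
  simpa [pathTrace_omitting] using congrArg (pathTrace · i) h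

end T1

open Classical in
/-- The tree `T1 k` has exactly `3^k + 1` maximum dissociation sets, of which exactly
`3^k` do not contain `v0`. -/
theorem stmt_9 (k : ℕ) :
    numMaxDissoc (T1 k) = 3 ^ k + 1 ∧
      (Finset.univ.filter fun F : Finset (T1V k) =>
          IsMaxDissoc (T1 k) F ∧ T1V.v0 ∉ F).card = 3 ^ k := by
  have hcard : #(univ.image (T1.omitting (k := k))) = 3 ^ k := by
    simp [card_image_of_injective _ T1.omitting_injective]
  constructor
  · have hnew : T1.withV0 ∉ univ.image (T1.omitting (k := k)) := by
      simp only [mem_image, mem_univ, true_and, not_exists]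
      exact fun f h => T1.v0_notMem_omitting f (h ▸ T1.v0_mem_withV0)
    rw [numMaxDissoc, ← hcard, ← card_insert_of_notMem hnew]
    congr 1; ext F; simp [T1.isMaxDissoc_iff, eq_comm]
  · rw [← hcard]
    congr 1; ext F
    simp only [mem_filter, mem_univ, true_and, mem_image, T1.isMaxDissoc_iff]
    constructor
    · rintro ⟨rfl | ⟨f, rfl⟩, hF⟩
      exacts [absurd T1.v0_mem_withV0 hF, ⟨f, rfl⟩]
    · rintro ⟨f, rfl⟩
      exact ⟨Or.inr ⟨f, rfl⟩, T1.v0_notMem_omitting f⟩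
end
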